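/- arXiv:1910.08609 — 5 statements merged into one kernel-verified Lean document; each statement's English description precedes it below -/
import Mathlib

section
/- Let X be a Banach space, λ ∈ ℂ with Re λ > 0, n ≥ 0 an integer, and f : [0,∞) → X continuous with ‖f‖_n = sup_{t≥0} ‖f(t)‖/(1+t)^n < ∞. Then g(t) = ∫ₜ^∞ e^{λ(t−s)} f(s) ds is well defined and satisfies sup_{t≥0} ‖g(t)‖/(1+t)^n ≤ (e^{Re λ} Γ(n+1, Re λ)/(Re λ)^{n+1}) ‖f‖_n, where Γ(a,x) = ∫ₓ^∞ t^{a−1} e^{−t} dt is the upper incomplete Gamma function. -/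
open Set MeasureTheory

/-- The upper incomplete Gamma function `Γ(a, x) = ∫ₓ^∞ t^{a−1} e^{−t} dt`. -/
noncomputable def upperGamma (a x : ℝ) : ℝ :=
  ∫ t in Set.Ioi x, t ^ (a - 1) * Real.exp (-t)

/-!
Let `M` be the weighted supremum of `f`, so `‖f s‖ ≤ M (1 + s)^n`. Substituting `s = t + u`,
`‖g t‖ ≤ M ∫₀^∞ e^{-(Re λ) u} (1 + t + u)^n du`, and `1 + t + u ≤ (1 + t)(1 + u)` pulls out
the factor `(1 + t)^n`. The remaining integral `∫₀^∞ (1 + u)^n e^{-(Re λ) u} du` becomes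
`e^{Re λ} Γ(n + 1, Re λ) / (Re λ)^{n + 1}` under the substitution `v = (Re λ)(1 + u)`.
-/

section Translation
variable {E : Type*} [NormedAddCommGroup E]

theorem integrableOn_Ioi_comp_add_left_iff (F : ℝ → E) (t : ℝ) :
    IntegrableOn (fun u => F (t + u)) (Ioi 0) ↔ IntegrableOn F (Ioi t) := by
  simpa [Function.comp_def] using (measurePreserving_add_left volume t).integrableOn_comp_preimage
    (MeasurableEquiv.addLeft t).measurableEmbedding (f := F) (s := Ioi t)

theorem setIntegral_Ioi_comp_add_left [NormedSpace ℝ E] (F : ℝ → E) (t : ℝ) :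
    ∫ u in Ioi 0, F (t + u) = ∫ s in Ioi t, F s := by
  simpa using (measurePreserving_add_left volume t).setIntegral_preimage_emb
    (MeasurableEquiv.addLeft t).measurableEmbedding F (Ioi t)

end Translation

theorem rpow_sub_one_mul_exp_neg_mul_one_add (n : ℕ) (x u : ℝ) :
    (x * (1 + u)) ^ ((n + 1 : ℝ) - 1) * Real.exp (-(x * (1 + u))) =
      x ^ n * Real.exp (-x) * ((1 + u) ^ n * Real.exp (-(x * u))) := by
  rw [add_sub_cancel_right, Real.rpow_natCast, mul_pow, mul_one_add, neg_add, Real.exp_add]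
  ring

theorem integrableOn_Ioi_rpow_sub_one_mul_exp_neg {a x : ℝ} (ha : 0 < a) (hx : 0 ≤ x) :
    IntegrableOn (fun t => t ^ (a - 1) * Real.exp (-t)) (Ioi x) :=
  ((Real.GammaIntegral_convergent ha).mono_set (Ioi_subset_Ioi hx)).congr_fun
    (fun _ _ => mul_comm _ _) measurableSet_Ioi

theorem integrableOn_one_add_pow_mul_exp_neg_mul (n : ℕ) {x : ℝ} (hx : 0 < x) :
    IntegrableOn (fun u => (1 + u) ^ n * Real.exp (-(x * u))) (Ioi 0) := by
  have h := integrableOn_Ioi_rpow_sub_one_mul_exp_neg (a := n + 1) (by positivity) hx.le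
  rw [← mul_one x, ← integrableOn_Ioi_comp_mul_left_iff _ _ hx,
    ← integrableOn_Ioi_comp_add_left_iff] at h
  simp only [rpow_sub_one_mul_exp_neg_mul_one_add] at h
  exact (integrable_const_mul_iff (by positivity : x ^ n * Real.exp (-x) ≠ 0).isUnit _).1 h

theorem integral_one_add_pow_mul_exp_neg_mul (n : ℕ) {x : ℝ} (hx : 0 < x) :
    ∫ u in Ioi 0, (1 + u) ^ n * Real.exp (-(x * u)) =
      Real.exp x * upperGamma (n + 1) x / x ^ (n + 1) := by
  have h := integral_comp_mul_left_Ioi (fun t => t ^ ((n + 1 : ℝ) - 1) * Real.exp (-t)) 1 hx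
  rw [mul_one, ← setIntegral_Ioi_comp_add_left] at h
  simp only [rpow_sub_one_mul_exp_neg_mul_one_add, integral_const_mul, smul_eq_mul] at h
  rw [eq_inv_mul_iff_mul_eq₀ hx.ne'] at h
  rw [upperGamma, ← h, Real.exp_neg]
  generalize ∫ u in Ioi 0, (1 + u) ^ n * Real.exp (-(x * u)) = I
  field_simp
  ring

theorem one_add_add_pow_le_mul {t u : ℝ} (ht : 0 ≤ t) (hu : 0 ≤ u) (n : ℕ) :
    (1 + (t + u)) ^ n ≤ (1 + t) ^ n * (1 + u) ^ n := by
  rw [← mul_pow]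
  exact pow_le_pow_left₀ (by positivity) (by nlinarith) n

section Convolution

variable {X : Type*} [NormedAddCommGroup X] [NormedSpace ℂ X]
  {n : ℕ} {lam : ℂ} {f : ℝ → X} {M t : ℝ}

theorem norm_cexp_mul_ofReal_smul (lam : ℂ) (r : ℝ) (v : X) :
    ‖Complex.exp (lam * r) • v‖ = Real.exp (lam.re * r) * ‖v‖ := by
  rw [norm_smul, Complex.norm_exp, Complex.re_mul_ofReal]

theorem norm_cexp_mul_sub_smul_comp_add_le (ht : 0 ≤ t)
    (hf : ∀ s ∈ Ioi t, ‖f s‖ ≤ M * (1 + s) ^ n) {u : ℝ} (hu : 0 < u) :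
    ‖Complex.exp (lam * (t - ((t + u : ℝ) : ℂ))) • f (t + u)‖ ≤
      M * (1 + t) ^ n * ((1 + u) ^ n * Real.exp (-(lam.re * u))) := by
  have hM : 0 ≤ M := nonneg_of_mul_nonneg_left ((norm_nonneg _).trans (hf (t + u) (by simpa)))
    (by positivity)
  rw [show (t : ℂ) - ((t + u : ℝ) : ℂ) = ((-u : ℝ) : ℂ) by push_cast; ring,
    norm_cexp_mul_ofReal_smul, mul_neg, mul_comm]
  calc ‖f (t + u)‖ * Real.exp (-(lam.re * u))
      ≤ M * ((1 + t) ^ n * (1 + u) ^ n) * Real.exp (-(lam.re * u)) := by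
        gcongr
        exact (hf (t + u) (by simpa)).trans
          (mul_le_mul_of_nonneg_left (one_add_add_pow_le_mul ht hu.le n) hM)
    _ = _ := by ring

theorem integrableOn_Ioi_cexp_mul_sub_smul (hlam : 0 < lam.re) (ht : 0 ≤ t)
    (hcont : ContinuousOn f (Ioi t)) (hf : ∀ s ∈ Ioi t, ‖f s‖ ≤ M * (1 + s) ^ n) :
    IntegrableOn (fun s : ℝ => Complex.exp (lam * (t - s)) • f s) (Ioi t) := by
  rw [← integrableOn_Ioi_comp_add_left_iff]
  refine Integrable.mono' ((integrableOn_one_add_pow_mul_exp_neg_mul n hlam).const_mul _) ?_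
    ((ae_restrict_iff' measurableSet_Ioi).2 (.of_forall fun u hu =>
      norm_cexp_mul_sub_smul_comp_add_le ht hf hu))
  have hexp : Continuous fun u : ℝ => Complex.exp (lam * (t - ((t + u : ℝ) : ℂ))) := by fun_prop
  exact (hexp.continuousOn.smul (hcont.comp (by fun_prop) fun u (hu : 0 < u) => by simpa))
    |>.aestronglyMeasurable measurableSet_Ioi

theorem norm_integral_Ioi_cexp_mul_sub_smul_le (hlam : 0 < lam.re) (ht : 0 ≤ t)
    (hf : ∀ s ∈ Ioi t, ‖f s‖ ≤ M * (1 + s) ^ n) :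
    ‖∫ s in Ioi t, Complex.exp (lam * (t - s)) • f s‖ ≤
      M * (1 + t) ^ n * ∫ u in Ioi 0, (1 + u) ^ n * Real.exp (-(lam.re * u)) := by
  rw [← setIntegral_Ioi_comp_add_left, ← integral_const_mul]
  exact norm_integral_le_of_norm_le ((integrableOn_one_add_pow_mul_exp_neg_mul n hlam).const_mul _)
    ((ae_restrict_iff' measurableSet_Ioi).2 (.of_forall fun u hu =>
      norm_cexp_mul_sub_smul_comp_add_le ht hf hu))

end Convolution

theorem convolution_nNorm_bound_pos_general
    {X : Type*} [NormedAddCommGroup X] [NormedSpace ℂ X]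
    (n : ℕ) (lam : ℂ) (hlam : 0 < lam.re) (f : ℝ → X)
    (hcont : ContinuousOn f (Set.Ici 0))
    (hbdd : BddAbove (Set.range fun t : Set.Ici (0 : ℝ) => ‖f t‖ / (1 + (t : ℝ)) ^ n)) :
    (∀ t : ℝ, 0 ≤ t →
      IntegrableOn (fun s : ℝ => Complex.exp (lam * (t - s)) • f s) (Set.Ioi t)) ∧
    (⨆ t : Set.Ici (0 : ℝ),
        ‖∫ s in Set.Ioi (t : ℝ), Complex.exp (lam * ((t : ℝ) - s)) • f s‖
          / (1 + (t : ℝ)) ^ n) ≤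
      (Real.exp lam.re * upperGamma (n + 1) lam.re / lam.re ^ (n + 1)) *
        ⨆ t : Set.Ici (0 : ℝ), ‖f t‖ / (1 + (t : ℝ)) ^ n := by
  set M := ⨆ t : Ici (0 : ℝ), ‖f t‖ / (1 + (t : ℝ)) ^ n
  have hfM (t : ℝ) (ht : 0 ≤ t) : ∀ s ∈ Ioi t, ‖f s‖ ≤ M * (1 + s) ^ n := fun s hs =>
    have hs : 0 ≤ s := ht.trans hs.le
    (div_le_iff₀ (by positivity)).1 (le_ciSup hbdd ⟨s, hs⟩)
  refine ⟨fun t ht => integrableOn_Ioi_cexp_mul_sub_smul hlam ht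
    (hcont.mono (Ioi_subset_Ici_self.trans (Ici_subset_Ici.2 ht))) (hfM t ht), ?_⟩
  have : Nonempty (Ici (0 : ℝ)) := ⟨⟨0, self_mem_Ici⟩⟩
  refine ciSup_le fun ⟨t, (ht : 0 ≤ t)⟩ => ?_
  rw [div_le_iff₀ (by positivity), ← integral_one_add_pow_mul_exp_neg_mul n hlam]
  calc _ ≤ M * (1 + t) ^ n * ∫ u in Ioi 0, (1 + u) ^ n * Real.exp (-(lam.re * u)) :=
        norm_integral_Ioi_cexp_mul_sub_smul_le hlam ht (hfM t ht)
    _ = _ := by ring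

/-- for `Re λ > 0` and continuous `n`-bounded `f`, the function
`g(t) = ∫ₜ^∞ e^{λ(t−s)} f(s) ds` is well defined and satisfies
`sup_{t≥0} ‖g(t)‖/(1+t)^n ≤ (e^{Re λ} Γ(n+1, Re λ)/(Re λ)^{n+1}) ‖f‖ₙ`. -/
theorem convolution_nNorm_bound_pos
    {X : Type*} [NormedAddCommGroup X] [NormedSpace ℂ X] [CompleteSpace X]
    (n : ℕ) (lam : ℂ) (hlam : 0 < lam.re) (f : ℝ → X)
    (hcont : ContinuousOn f (Set.Ici 0))
    (hbdd : BddAbove (Set.range fun t : Set.Ici (0 : ℝ) => ‖f t‖ / (1 + (t : ℝ)) ^ n)) :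
    (∀ t : ℝ, 0 ≤ t →
      IntegrableOn (fun s : ℝ => Complex.exp (lam * (t - s)) • f s) (Set.Ioi t)) ∧
    (⨆ t : Set.Ici (0 : ℝ),
        ‖∫ s in Set.Ioi (t : ℝ), Complex.exp (lam * ((t : ℝ) - s)) • f s‖
          / (1 + (t : ℝ)) ^ n) ≤
      (Real.exp lam.re * upperGamma (n + 1) lam.re / lam.re ^ (n + 1)) *
        ⨆ t : Set.Ici (0 : ℝ), ‖f t‖ / (1 + (t : ℝ)) ^ n :=
  convolution_nNorm_bound_pos_general n lam hlam f hcont hbdd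
end

section
/- Let X be a Banach space, N a natural number, ξ ∈ ℝ, and f holomorphic on a punctured disk {0 < |z − iξ| < 1} with ‖f(z)‖ ≤ M/|Re z|^N for all z with Re z ≠ 0 and |Re z| < 1. If a_k = (1/2πi)∮_{|z−iξ|=r} f(z)/(z−iξ)^{k+1} dz are the Laurent coefficients of f at iξ, then for every k ∈ ℤ and 0 < r < 1: ‖∑_{j=0}^N C(N,j) r^{2N−2j} a_{k−2j}‖ ≤ 2^N M r^{N−k}. -/
/-!
For `‖w‖ = r` one has `r² + w² = w (conj w + w) = 2 w Re w`, so on the circle `|z - iξ| = r` the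
factor `r² + (z - iξ)²` has norm `2 r |Re z|`. By the binomial theorem the combination of Laurent
coefficients is `(2πi)⁻¹ ∮ (r² + (z - iξ)²)^N (z - iξ)^{-(k+1)} f(z) dz`, and the factor
`(2 r |Re z|)^N` cancels the growth `|Re z|^{-N}` of `f`: off the two points of the circle where
`Re z = 0` the integrand is bounded by `2^N M r^{N-k-1}`.
-/

open Complex Metric

theorem norm_sq_add_sq_eq_of_norm_eq {w : ℂ} {r : ℝ} (hw : ‖w‖ = r) :
    ‖(r : ℂ) ^ 2 + w ^ 2‖ = 2 * r * |w.re| := by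
  have h : (r : ℂ) ^ 2 + w ^ 2 = w * ((2 * w.re : ℝ) : ℂ) := by
    rw [← add_conj, ← hw, ← mul_conj']
    ring
  rw [h, norm_mul, hw, norm_real, Real.norm_eq_abs, abs_mul, abs_two]
  ring

theorem sum_choose_mul_zpow_eq {K : Type*} [Field K] (N : ℕ) (k : ℤ) (r : K) {w : K}
    (hw : w ≠ 0) :
    ∑ j ∈ Finset.range (N + 1), (N.choose j * r ^ (2 * (N - j))) * w ^ (-(k - 2 * j + 1)) =
      (r ^ 2 + w ^ 2) ^ N * w ^ (-(k + 1)) := by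
  have hsplit (j : ℕ) : w ^ (-(k - 2 * j + 1)) = (w ^ 2) ^ j * w ^ (-(k + 1)) := by
    rw [show -(k - 2 * j + 1) = ((2 * j : ℕ) : ℤ) + -(k + 1) by push_cast; ring,
      zpow_add₀ hw, zpow_natCast, pow_mul]
  rw [add_comm (r ^ 2), add_pow, Finset.sum_mul]
  refine Finset.sum_congr rfl fun j _ => ?_
  rw [hsplit, pow_mul]
  ring

theorem ae_cos_ne_zero : ∀ᵐ θ : ℝ, Real.cos θ ≠ 0 := by
  have hcount : {θ : ℝ | Real.cos θ = 0}.Countable := by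
    refine (Set.countable_range fun n : ℤ => (2 * n + 1) * Real.pi / 2).mono fun θ hθ => ?_
    obtain ⟨n, hn⟩ := Real.cos_eq_zero_iff.mp hθ
    exact ⟨n, hn.symm⟩
  exact hcount.ae_notMem _

theorem ae_re_circleMap_ne {c : ℂ} {R : ℝ} (hR : R ≠ 0) :
    ∀ᵐ θ : ℝ, (circleMap c R θ).re ≠ c.re := by
  filter_upwards [ae_cos_ne_zero] with θ hθ
  simpa [circleMap] using mul_ne_zero hR hθ

section

variable {E : Type*} [NormedAddCommGroup E] [NormedSpace ℂ E]

theorem norm_circleIntegral_le_of_ae_norm_le {f : ℂ → E} {c : ℂ} {R C : ℝ}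
    (hf : ∀ᵐ θ : ℝ, ‖f (circleMap c R θ)‖ ≤ C) :
    ‖∮ z in C(c, R), f z‖ ≤ 2 * Real.pi * |R| * C := by
  have hbound : ∀ᵐ θ : ℝ, θ ∈ Set.uIoc 0 (2 * Real.pi) →
      ‖deriv (circleMap c R) θ • f (circleMap c R θ)‖ ≤ |R| * C := by
    filter_upwards [hf] with θ hθ _
    rw [norm_smul, deriv_circleMap, norm_mul, norm_circleMap_zero, norm_I, mul_one]
    gcongr
  calc ‖∮ z in C(c, R), f z‖ ≤ |R| * C * |2 * Real.pi - 0| :=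
        intervalIntegral.norm_integral_le_of_norm_le_const_ae hbound
    _ = 2 * Real.pi * |R| * C := by rw [sub_zero, abs_of_pos Real.two_pi_pos]; ring

theorem sum_choose_smul_circleIntegral_eq {f : ℂ → E} {c : ℂ} {r : ℝ} (hr : 0 < r)
    (hf : ContinuousOn f (sphere c r)) (N : ℕ) (k : ℤ) :
    ∑ j ∈ Finset.range (N + 1), ((N.choose j : ℝ) * r ^ (2 * (N - j))) •
        ∮ z in C(c, r), (z - c) ^ (-(k - 2 * j + 1)) • f z =
      ∮ z in C(c, r), (((r : ℂ) ^ 2 + (z - c) ^ 2) ^ N * (z - c) ^ (-(k + 1))) • f z := by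
  have hne : ∀ z ∈ sphere c r, z - c ≠ 0 := fun z hz => sub_ne_zero.2 (ne_of_mem_sphere hz hr.ne')
  have hint (j : ℕ) : CircleIntegrable
      (fun z => ((N.choose j : ℝ) * r ^ (2 * (N - j))) • (z - c) ^ (-(k - 2 * j + 1)) • f z) c r :=
    (continuousOn_const.smul (((continuousOn_id.sub continuousOn_const).zpow₀ _
      fun z hz => Or.inl (hne z hz)).smul hf)).circleIntegrable hr.le
  have hsum : Set.EqOn
      (fun z => ∑ j ∈ Finset.range (N + 1),
        ((N.choose j : ℝ) * r ^ (2 * (N - j))) • (z - c) ^ (-(k - 2 * j + 1)) • f z)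
      (fun z => (((r : ℂ) ^ 2 + (z - c) ^ 2) ^ N * (z - c) ^ (-(k + 1))) • f z) (sphere c r) := by
    intro z hz
    simp only [← sum_choose_mul_zpow_eq N k (r : ℂ) (hne z hz), Finset.sum_smul]
    refine Finset.sum_congr rfl fun j _ => ?_
    rw [← Complex.coe_smul, smul_smul]
    push_cast
    ring_nf
  rw [← circleIntegral.integral_congr hr.le hsum]
  simp only [circleIntegral.integral_fun_sum fun j _ => hint j,
    circleIntegral.integral_smul]

theorem norm_sq_add_sq_pow_mul_zpow_smul_le {c z : ℂ} {r M : ℝ} {x : E} (N : ℕ) (k : ℤ)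
    (hc : c.re = 0) (hr : 0 < r) (hz : ‖z - c‖ = r) (hre : z.re ≠ 0) (hx : ‖x‖ ≤ M / |z.re| ^ N) :
    ‖(((r : ℂ) ^ 2 + (z - c) ^ 2) ^ N * (z - c) ^ (-(k + 1))) • x‖ ≤
      2 ^ N * M * r ^ ((N : ℤ) - k - 1) := by
  have hre_pos : 0 < |z.re| := abs_pos.2 hre
  have hre_sub : (z - c).re = z.re := by rw [sub_re, hc, sub_zero]
  rw [norm_smul, norm_mul, norm_pow, norm_zpow, norm_sq_add_sq_eq_of_norm_eq hz, hz, hre_sub]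
  calc (2 * r * |z.re|) ^ N * r ^ (-(k + 1)) * ‖x‖
      ≤ (2 * r * |z.re|) ^ N * r ^ (-(k + 1)) * (M / |z.re| ^ N) := by gcongr
    _ = 2 ^ N * M * r ^ ((N : ℤ) - k - 1) := by
      rw [show (N : ℤ) - k - 1 = N + -(k + 1) by ring, zpow_add₀ hr.ne', zpow_natCast]
      field_simp
      ring

end

theorem laurent_coeff_estimate_general
    {X : Type*} [NormedAddCommGroup X] [NormedSpace ℂ X]
    (N : ℕ) (ξ M : ℝ) (f : ℂ → X) (a : ℤ → X)
    (hf : DifferentiableOn ℂ f (Metric.ball (Complex.I * ξ) 1 \ {Complex.I * ξ}))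
    (hM : ∀ z : ℂ, z.re ≠ 0 → |z.re| < 1 → ‖f z‖ ≤ M / |z.re| ^ N)
    (ha : ∀ k : ℤ, ∀ r : ℝ, 0 < r → r < 1 →
      a k = (2 * Real.pi * Complex.I)⁻¹ •
        ∮ z in C(Complex.I * ξ, r), ((z - Complex.I * ξ) ^ (-(k + 1)) : ℂ) • f z) :
    ∀ k : ℤ, ∀ r : ℝ, 0 < r → r < 1 →
      ‖∑ j ∈ Finset.range (N + 1), ((N.choose j : ℝ) * r ^ (2 * (N - j))) • a (k - 2 * j)‖ ≤
        2 ^ N * M * r ^ ((N : ℤ) - k) := by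
  intro k r hr0 hr1
  set c : ℂ := I * ξ
  have hc : c.re = 0 := by simp [c]
  have hfc : ContinuousOn f (sphere c r) := hf.continuousOn.mono fun z hz =>
    ⟨mem_ball.2 ((mem_sphere.1 hz).trans_lt hr1), ne_of_mem_sphere hz hr0.ne'⟩
  have hbound : ∀ᵐ θ : ℝ, ‖(((r : ℂ) ^ 2 + (circleMap c r θ - c) ^ 2) ^ N *
      (circleMap c r θ - c) ^ (-(k + 1))) • f (circleMap c r θ)‖ ≤
        2 ^ N * M * r ^ ((N : ℤ) - k - 1) := by
    filter_upwards [ae_re_circleMap_ne (c := c) hr0.ne'] with θ hre_ne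
    rw [hc] at hre_ne
    have hw : ‖circleMap c r θ - c‖ = r := by
      rw [circleMap_sub_center, norm_circleMap_zero, abs_of_pos hr0]
    have hre_lt : |(circleMap c r θ).re| < 1 := by
      have h := (abs_re_le_norm (circleMap c r θ - c)).trans_lt (hw.trans_lt hr1)
      rwa [sub_re, hc, sub_zero] at h
    exact norm_sq_add_sq_pow_mul_zpow_smul_le N k hc hr0 hw hre_ne (hM _ hre_ne hre_lt)
  calc ‖∑ j ∈ Finset.range (N + 1), ((N.choose j : ℝ) * r ^ (2 * (N - j))) • a (k - 2 * j)‖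
      = ‖(2 * Real.pi * I)⁻¹ •
          ∮ z in C(c, r), (((r : ℂ) ^ 2 + (z - c) ^ 2) ^ N * (z - c) ^ (-(k + 1))) • f z‖ := by
        simp only [ha _ r hr0 hr1, smul_comm _ (2 * Real.pi * I)⁻¹, ← Finset.smul_sum,
          sum_choose_smul_circleIntegral_eq hr0 hfc]
    _ ≤ (2 * Real.pi)⁻¹ * (2 * Real.pi * |r| * (2 ^ N * M * r ^ ((N : ℤ) - k - 1))) := by
        rw [norm_smul]
        gcongr
        · simp [abs_of_pos Real.pi_pos]
        · exact norm_circleIntegral_le_of_ae_norm_le hbound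
    _ = 2 ^ N * M * r ^ ((N : ℤ) - k) := by
        have hzpow : r ^ ((N : ℤ) - k) = r ^ ((N : ℤ) - k - 1) * r := by
          rw [← zpow_add_one₀ hr0.ne', sub_add_cancel]
        rw [abs_of_pos hr0, hzpow]
        field_simp

/-- if `f` is holomorphic on the punctured disk `{0 < |z − iξ| < 1}` and
satisfies `‖f(z)‖ ≤ M/|Re z|^N` for `Re z ≠ 0`, `|Re z| < 1`, then its Laurent
coefficients `aₖ` at `iξ` satisfy
`‖∑_{j=0}^N C(N,j) r^{2N−2j} a_{k−2j}‖ ≤ 2^N M r^{N−k}` for all `k ∈ ℤ`, `0 < r < 1`. -/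
theorem laurent_coeff_estimate
    {X : Type*} [NormedAddCommGroup X] [NormedSpace ℂ X] [CompleteSpace X]
    (N : ℕ) (ξ M : ℝ) (f : ℂ → X) (a : ℤ → X)
    (hf : DifferentiableOn ℂ f (Metric.ball (Complex.I * ξ) 1 \ {Complex.I * ξ}))
    (hM : ∀ z : ℂ, z.re ≠ 0 → |z.re| < 1 → ‖f z‖ ≤ M / |z.re| ^ N)
    (ha : ∀ k : ℤ, ∀ r : ℝ, 0 < r → r < 1 →
      a k = (2 * Real.pi * Complex.I)⁻¹ •
        ∮ z in C(Complex.I * ξ, r), ((z - Complex.I * ξ) ^ (-(k + 1)) : ℂ) • f z) :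
    ∀ k : ℤ, ∀ r : ℝ, 0 < r → r < 1 →
      ‖∑ j ∈ Finset.range (N + 1), ((N.choose j : ℝ) * r ^ (2 * (N - j))) • a (k - 2 * j)‖ ≤
        2 ^ N * M * r ^ ((N : ℤ) - k) :=
  laurent_coeff_estimate_general N ξ M f a hf hM ha
end

section
/- Let X be a Banach space, N = n+1 for an integer n ≥ 0, and f holomorphic on a punctured disk around iξ (ξ ∈ ℝ) satisfying ‖f(z)‖ ≤ M/|Re z|^N for 0 < |Re z| < 1. Then the Laurent coefficients a_k of f at iξ vanish for all k ≤ −(n+2); i.e., iξ is either a removable singularity or a pole of f of order at most n+1. -/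
/-!
On the circle `|z - iξ| = r` we have `r² (z - iξ)⁻¹ = conj (z - iξ)`, so
`(z - iξ) + r² (z - iξ)⁻¹ = 2 Re z` there, and the growth bound makes
`(z - iξ)^m ((z - iξ) + r² (z - iξ)⁻¹)^(n+1) f z` bounded by `2^(n+1) M` on the circle; its
circle integral is therefore `O(r)`. Expanding the binomial, the same integral equals
`2πi (a_k + ∑_{j ≤ n} C(n+1, j) r^(2(n+1-j)) a_(k + 2(n+1-j)))` with `k = -(m+n+2)`,
a polynomial in `r`; letting `r → 0` gives `a_k = 0`.
-/

open Complex Metric Finset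

theorem Complex.add_sq_norm_mul_inv (w : ℂ) : w + (‖w‖ : ℂ) ^ 2 * w⁻¹ = 2 * w.re := by
  rcases eq_or_ne w 0 with rfl | hw
  · simp
  rw [← mul_conj', mul_right_comm, mul_inv_cancel₀ hw, one_mul, add_conj, ofReal_mul,
    ofReal_ofNat]

theorem add_mul_inv_pow_eq_sum {K : Type*} [Field K] {w : K} (hw : w ≠ 0) (u : K) (N : ℕ) :
    (w + u * w⁻¹) ^ N =
      ∑ j ∈ range (N + 1), (N.choose j * u ^ (N - j)) * w ^ (2 * j - N : ℤ) := by
  rw [add_pow]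
  refine sum_congr rfl fun j hj => ?_
  have hjN : j ≤ N := Nat.lt_succ_iff.mp (mem_range.mp hj)
  have hzpow : w ^ (2 * j - N : ℤ) = w ^ j * w⁻¹ ^ (N - j) := by
    rw [← zpow_natCast, ← zpow_natCast, inv_zpow', ← zpow_add₀ hw]
    congr 1
    push_cast [hjN]
    ring
  rw [hzpow, mul_pow]
  ring

section CircleIntegral

variable {E : Type*} [NormedAddCommGroup E] [NormedSpace ℂ E] {f : ℂ → E} {c : ℂ} {r M : ℝ}
  {N : ℕ}

theorem ContinuousOn.sub_zpow_smul_sphere (hf : ContinuousOn f (sphere c r)) (hr : r ≠ 0)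
    (q : ℤ) : ContinuousOn (fun z => (z - c) ^ q • f z) (sphere c r) :=
  ((continuousOn_id.sub continuousOn_const).zpow₀ q fun _ hz =>
    Or.inl (sub_ne_zero.mpr (ne_of_mem_sphere hz hr))).smul hf

theorem circleIntegral_zpow_mul_add_mul_inv_pow_smul (hf : ContinuousOn f (sphere c r))
    (hr : 0 < r) (m : ℤ) (u : ℂ) (N : ℕ) :
    (∮ z in C(c, r), ((z - c) ^ m * (z - c + u * (z - c)⁻¹) ^ N) • f z) =
      ∑ j ∈ range (N + 1),
        (N.choose j * u ^ (N - j)) • ∮ z in C(c, r), (z - c) ^ (m + 2 * j - N) • f z := by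
  have hexpand : Set.EqOn (fun z => ((z - c) ^ m * (z - c + u * (z - c)⁻¹) ^ N) • f z)
      (fun z => ∑ j ∈ range (N + 1), (N.choose j * u ^ (N - j)) • (z - c) ^ (m + 2 * j - N) • f z)
      (sphere c r) := by
    intro z hz
    have hzc : z - c ≠ 0 := sub_ne_zero.mpr (ne_of_mem_sphere hz hr.ne')
    simp only [add_mul_inv_pow_eq_sum hzc, mul_sum, sum_smul, smul_smul]
    refine sum_congr rfl fun j _ => ?_
    rw [add_sub_assoc, zpow_add₀ hzc]
    ring_nf
  rw [circleIntegral.integral_congr hr.le hexpand, circleIntegral.integral_fun_sum]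
  · simp only [circleIntegral.integral_smul]
  · exact fun j _ =>
      (continuousOn_const.smul (hf.sub_zpow_smul_sphere hr.ne' _)).circleIntegrable hr.le

theorem norm_two_re_pow_smul_le (hN : N ≠ 0) (hM0 : 0 ≤ M)
    (hM : ∀ z : ℂ, z.re ≠ 0 → |z.re| < 1 → ‖f z‖ ≤ M / |z.re| ^ N) {z : ℂ} (hz : |z.re| < 1) :
    ‖(2 * (z.re : ℂ)) ^ N • f z‖ ≤ 2 ^ N * M := by
  rw [norm_smul, norm_pow, norm_mul, Complex.norm_two, norm_real, Real.norm_eq_abs, mul_pow,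
    mul_assoc]
  gcongr
  rcases eq_or_ne z.re 0 with hre | hre
  · simp [hre, hN, hM0]
  · exact (le_div_iff₀' (by positivity)).mp (hM z hre hz)

theorem norm_circleIntegral_zpow_mul_add_mul_inv_pow_smul_le (hc : c.re = 0) (hr0 : 0 < r)
    (hr1 : r < 1) (m : ℕ) (hN : N ≠ 0) (hM0 : 0 ≤ M)
    (hM : ∀ z : ℂ, z.re ≠ 0 → |z.re| < 1 → ‖f z‖ ≤ M / |z.re| ^ N) :
    ‖∮ z in C(c, r), ((z - c) ^ (m : ℤ) * (z - c + (r : ℂ) ^ 2 * (z - c)⁻¹) ^ N) • f z‖ ≤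
      2 * Real.pi * r * (2 ^ N * M) := by
  refine circleIntegral.norm_integral_le_of_norm_le_const hr0.le fun z hz => ?_
  have hzr : ‖z - c‖ = r := mem_sphere_iff_norm.mp hz
  have hre : (z - c).re = z.re := by rw [sub_re, hc, sub_zero]
  have hz1 : |z.re| < 1 := hre ▸ (abs_re_le_norm (z - c)).trans_lt (hzr ▸ hr1)
  rw [← hzr, add_sq_norm_mul_inv, hre, mul_smul, norm_smul, zpow_natCast, norm_pow, hzr]
  calc r ^ m * ‖(2 * (z.re : ℂ)) ^ N • f z‖ ≤ 1 * (2 ^ N * M) :=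
        mul_le_mul (pow_le_one₀ hr0.le hr1.le) (norm_two_re_pow_smul_le hN hM0 hM hz1)
          (norm_nonneg _) zero_le_one
    _ = 2 ^ N * M := one_mul _

end CircleIntegral

theorem eq_zero_of_norm_le_mul_of_continuousAt {E : Type*} [NormedAddCommGroup E] {φ : ℝ → E}
    (hφ : ContinuousAt φ 0) {C : ℝ} (h : ∀ r ∈ Set.Ioo 0 1, ‖φ r‖ ≤ C * r) : φ 0 = 0 := by
  refine tendsto_nhds_unique (hφ.tendsto.mono_left (nhdsWithin_le_nhds (s := Set.Ioi 0)))
    (squeeze_zero_norm' (a := fun r => C * r) ?_ ?_)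
  · filter_upwards [Ioo_mem_nhdsGT one_pos] with r hr using h r hr
  · exact ((continuous_const.mul continuous_id).tendsto' 0 0 (by simp)).mono_left
      nhdsWithin_le_nhds

theorem laurent_pole_order_le_general
    {X : Type*} [NormedAddCommGroup X] [NormedSpace ℂ X]
    (n : ℕ) (ξ M : ℝ) (f : ℂ → X) (a : ℤ → X)
    (hf : DifferentiableOn ℂ f (Metric.ball (Complex.I * ξ) 1 \ {Complex.I * ξ}))
    (hM : ∀ z : ℂ, z.re ≠ 0 → |z.re| < 1 → ‖f z‖ ≤ M / |z.re| ^ (n + 1))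
    (ha : ∀ k : ℤ, ∀ r : ℝ, 0 < r → r < 1 →
      a k = (2 * Real.pi * Complex.I)⁻¹ •
        ∮ z in C(Complex.I * ξ, r), ((z - Complex.I * ξ) ^ (-(k + 1)) : ℂ) • f z) :
    ∀ k : ℤ, k ≤ -((n : ℤ) + 2) → a k = 0 := by
  intro k hk
  obtain ⟨m, rfl⟩ : ∃ m : ℕ, k = -((m : ℤ) + (n + 1) + 1) := ⟨(-k - (n + 2)).toNat, by omega⟩
  set c := I * ξ
  have hM0 : 0 ≤ M := by simpa using (norm_nonneg _).trans (hM (1 / 2) (by norm_num) (by norm_num))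
  have hcoeff (q : ℤ) (r : ℝ) (hr : r ∈ Set.Ioo 0 1) :
      (∮ z in C(c, r), (z - c) ^ q • f z) = (2 * Real.pi * I : ℂ) • a (-q - 1) := by
    rw [ha _ r hr.1 hr.2, sub_add_cancel, neg_neg, smul_inv_smul₀ two_pi_I_ne_zero]
  let φ : ℝ → X := fun r => ∑ j ∈ range (n + 1 + 1),
    ((n + 1).choose j * ((r : ℂ) ^ 2) ^ (n + 1 - j)) •
      (2 * Real.pi * I : ℂ) • a (-((m : ℤ) + 2 * j - (n + 1 : ℕ)) - 1)
  have hφ0 : φ 0 = (2 * Real.pi * I : ℂ) • a (-((m : ℤ) + (n + 1) + 1)) := by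
    simp only [φ]
    rw [sum_range_succ, sum_eq_zero fun j hj => by simp [Nat.sub_ne_zero_of_lt (mem_range.mp hj)]]
    simp only [ofReal_zero, Nat.choose_self, Nat.sub_self, pow_zero, Nat.cast_one, one_mul,
      one_smul, zero_add]
    congr 2
    push_cast
    ring
  have hφ (r : ℝ) (hr : r ∈ Set.Ioo 0 1) : ‖φ r‖ ≤ 2 * Real.pi * (2 ^ (n + 1) * M) * r := by
    have hfr : ContinuousOn f (sphere c r) := hf.continuousOn.mono fun z hz =>
      ⟨sphere_subset_ball hr.2 hz, ne_of_mem_sphere hz hr.1.ne'⟩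
    calc ‖φ r‖ = ‖∮ z in C(c, r),
          ((z - c) ^ (m : ℤ) * (z - c + (r : ℂ) ^ 2 * (z - c)⁻¹) ^ (n + 1)) • f z‖ := by
          rw [circleIntegral_zpow_mul_add_mul_inv_pow_smul hfr hr.1]
          simp only [hcoeff _ r hr, φ]
      _ ≤ 2 * Real.pi * r * (2 ^ (n + 1) * M) :=
          norm_circleIntegral_zpow_mul_add_mul_inv_pow_smul_le (by simp [c]) hr.1 hr.2 m
            n.succ_ne_zero hM0 hM
      _ = 2 * Real.pi * (2 ^ (n + 1) * M) * r := by ring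
  have h2πIa : (2 * Real.pi * I : ℂ) • a (-((m : ℤ) + (n + 1) + 1)) = 0 :=
    hφ0 ▸ eq_zero_of_norm_le_mul_of_continuousAt (by fun_prop) hφ
  exact (smul_eq_zero.mp h2πIa).resolve_left two_pi_I_ne_zero

/-- if `f` is holomorphic on a punctured disk around `iξ` and satisfies
`‖f(z)‖ ≤ M/|Re z|^{n+1}` for `0 < |Re z| < 1`, then the Laurent coefficients `aₖ` of `f`
at `iξ` vanish for all `k ≤ −(n+2)`; that is, `iξ` is a removable singularity or a pole
of order at most `n+1`. -/
theorem laurent_pole_order_le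
    {X : Type*} [NormedAddCommGroup X] [NormedSpace ℂ X] [CompleteSpace X]
    (n : ℕ) (ξ M : ℝ) (f : ℂ → X) (a : ℤ → X)
    (hf : DifferentiableOn ℂ f (Metric.ball (Complex.I * ξ) 1 \ {Complex.I * ξ}))
    (hM : ∀ z : ℂ, z.re ≠ 0 → |z.re| < 1 → ‖f z‖ ≤ M / |z.re| ^ (n + 1))
    (ha : ∀ k : ℤ, ∀ r : ℝ, 0 < r → r < 1 →
      a k = (2 * Real.pi * Complex.I)⁻¹ •
        ∮ z in C(Complex.I * ξ, r), ((z - Complex.I * ξ) ^ (-(k + 1)) : ℂ) • f z) :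
    ∀ k : ℤ, k ≤ -((n : ℤ) + 2) → a k = 0 :=
  laurent_pole_order_le_general n ξ M f a hf hM ha
end

section
/- Let X be a Banach space and G : B(iξ₀, r) → Y an analytic function on an open disk centered at iξ₀ ∈ iℝ that agrees with R(λ, D)x for all λ in the disk with Re λ > 0, where D is a closed operator on a Banach space Y whose resolvent set contains {Re λ ≠ 0} and x ∈ Y. Then G(λ) = R(λ, D)x for all λ in the disk with Re λ < 0 as well. -/
open Metric Complex

/-! Since `D` is everywhere defined, closedness of its graph makes it bounded, so
`λ ↦ (λ - D) G(λ)` is holomorphic on the disk; it equals `x` on the right half, hence on the whole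
disk by the identity theorem, and applying `R(λ, D)` on the left half gives `G(λ) = R(λ, D) x`. -/

theorem LinearMap.continuous_of_isClosed_setOf_apply_eq {𝕜 E F : Type*} [NontriviallyNormedField 𝕜]
    [NormedAddCommGroup E] [NormedSpace 𝕜 E] [CompleteSpace E]
    [NormedAddCommGroup F] [NormedSpace 𝕜 F] [CompleteSpace F]
    (g : E →ₗ[𝕜] F) (hg : IsClosed {p : E × F | g p.1 = p.2}) : Continuous g := by
  refine g.continuous_of_isClosed_graph ?_
  convert hg using 1
  ext p
  simp [LinearMap.mem_graph_iff, eq_comm]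

theorem DifferentiableOn.eqOn_ball_of_eqOn_inter_isOpen {E : Type*} [NormedAddCommGroup E]
    [NormedSpace ℂ E] [CompleteSpace E] {f g : ℂ → E} {c : ℂ} {r : ℝ} {V : Set ℂ}
    (hf : DifferentiableOn ℂ f (ball c r)) (hg : DifferentiableOn ℂ g (ball c r))
    (hV : IsOpen V) (hne : (ball c r ∩ V).Nonempty) (hfg : Set.EqOn f g (ball c r ∩ V)) :
    Set.EqOn f g (ball c r) := by
  obtain ⟨z₀, hz₀⟩ := hne
  have hfg₀ : f =ᶠ[nhds z₀] g :=
    Filter.mem_of_superset ((isOpen_ball.inter hV).mem_nhds hz₀) hfg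
  exact (hf.analyticOnNhd isOpen_ball).eqOn_of_preconnected_of_eventuallyEq
    (hg.analyticOnNhd isOpen_ball) (convex_ball c r).isPreconnected hz₀.1 hfg₀

theorem ball_I_mul_inter_re_pos_nonempty (ξ : ℝ) {r : ℝ} (hr : 0 < r) :
    (ball (I * ξ) r ∩ {z : ℂ | 0 < z.re}).Nonempty := by
  refine ⟨I * ξ + (r / 2 : ℝ), ?_, ?_⟩
  · rw [mem_ball, dist_eq_norm, add_sub_cancel_left, norm_real, Real.norm_of_nonneg (by positivity)]
    linarith
  · simp only [Set.mem_ofPred_eq, add_re, mul_re, I_re, I_im, ofReal_re, ofReal_im]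
    linarith

theorem resolvent_analytic_extension_agrees_general
    {Y : Type*} [NormedAddCommGroup Y] [NormedSpace ℂ Y] [CompleteSpace Y]
    (D : Y →ₗ[ℂ] Y) (hclosed : IsClosed {p : Y × Y | D p.1 = p.2})
    (R : ℂ → Y →L[ℂ] Y)
    (hres : ∀ lam : ℂ, lam.re ≠ 0 → ∀ y : Y,
      lam • R lam y - D (R lam y) = y ∧ R lam (lam • y - D y) = y)
    (ξ₀ : ℝ) (r : ℝ) (x : Y) (G : ℂ → Y)
    (hG : DifferentiableOn ℂ G (Metric.ball (Complex.I * ξ₀) r))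
    (hagree : ∀ lam ∈ Metric.ball (Complex.I * ξ₀) r, 0 < lam.re → G lam = R lam x) :
    ∀ lam ∈ Metric.ball (Complex.I * ξ₀) r, lam.re < 0 → G lam = R lam x := by
  intro lam hlam hneg
  let Dc : Y →L[ℂ] Y := ⟨D, D.continuous_of_isClosed_setOf_apply_eq hclosed⟩
  have hshift : Set.EqOn (fun μ : ℂ => μ • G μ - D (G μ)) (fun _ => x)
      (ball (I * ξ₀) r) := by
    refine DifferentiableOn.eqOn_ball_of_eqOn_inter_isOpen
      ((differentiableOn_id.smul hG).sub (Dc.differentiable.comp_differentiableOn hG))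
      (differentiableOn_const x) (isOpen_lt continuous_const continuous_re)
      (ball_I_mul_inter_re_pos_nonempty ξ₀ (pos_of_mem_ball hlam)) ?_
    rintro μ ⟨hμ, hμre⟩
    simpa only [hagree μ hμ hμre] using (hres μ hμre.ne' x).1
  simpa only [hshift hlam] using ((hres lam hneg.ne (G lam)).2).symm

/-- let `D` be a closed operator on a Banach space `Y` whose resolvent set
contains `{Re λ ≠ 0}`, with resolvent family `R`. If `G` is analytic on an open disk
`B(iξ₀, r)` and `G(λ) = R(λ)x` for all `λ` in the disk with `Re λ > 0`, then also
`G(λ) = R(λ)x` for all `λ` in the disk with `Re λ < 0`. -/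
theorem resolvent_analytic_extension_agrees
    {Y : Type*} [NormedAddCommGroup Y] [NormedSpace ℂ Y] [CompleteSpace Y]
    (D : Y →ₗ[ℂ] Y) (hclosed : IsClosed {p : Y × Y | D p.1 = p.2})
    (R : ℂ → Y →L[ℂ] Y)
    (hres : ∀ lam : ℂ, lam.re ≠ 0 → ∀ y : Y,
      lam • R lam y - D (R lam y) = y ∧ R lam (lam • y - D y) = y)
    (hRanal : DifferentiableOn ℂ (fun lam => R lam) {lam : ℂ | lam.re ≠ 0})
    (ξ₀ : ℝ) (r : ℝ) (hr : 0 < r) (x : Y) (G : ℂ → Y)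
    (hG : DifferentiableOn ℂ G (Metric.ball (Complex.I * ξ₀) r))
    (hagree : ∀ lam ∈ Metric.ball (Complex.I * ξ₀) r, 0 < lam.re → G lam = R lam x) :
    ∀ lam ∈ Metric.ball (Complex.I * ξ₀) r, lam.re < 0 → G lam = R lam x :=
  resolvent_analytic_extension_agrees_general D hclosed R hres ξ₀ r x G hG hagree
end

section
/- Let Y be a Banach space and D a closed operator on Y with ℂ\iℝ ⊆ ρ(D). Suppose x ∈ Y is such that λ ↦ R(λ,D)x extends analytically across every point of iℝ except a countable closed set E ⊆ iℝ, and at each isolated singular point iη the function has at worst a pole of order ≤ n+1 whose residue data satisfy lim_{α↓0} α R(α+iη, D)x = 0 making the singularity removable. If moreover ‖R(λ,D)x‖ ≤ M/|Re λ|^{n+1} near iℝ, then the singular set of the extension is empty, i.e., λ ↦ R(λ,D)x extends to an entire function. -/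
/-!
The points of the imaginary axis near which `λ ↦ R(λ)x` has no holomorphic extension form a
closed set which, lying in `iE`, is countable. It has no isolated points: near an isolated
singular point `iη`, the bound `‖R(λ)x‖ ≤ M / |Re λ|^(n+1)` combined with the maximum modulus
principle on annuli around `iη`, for a weight that is `O(|Re λ|)` on both boundary circles, shows
that `(λ - iη)^(n+1) R(λ)x` is bounded, so `iη` is at worst a pole of order `n + 1`; the ergodic
condition `α R(α + iη)x → 0` then removes the principal part one order at a time. A countable
closed set without isolated points is empty, so the local extensions glue to an entire function.
-/

open Metric Complex Filter Topology Set

theorem Perfect.eq_empty_of_countable {α : Type*} [MetricSpace α] [CompleteSpace α]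
    {C : Set α} (hC : Perfect C) (hcount : C.Countable) : C = ∅ := by
  by_contra hne
  obtain ⟨f, hfC, -, hf⟩ := hC.exists_nat_bool_injection (nonempty_iff_ne_empty.mpr hne)
  have : Countable (ℕ → Bool) := by
    have := (hcount.mono hfC).to_subtype
    exact (rangeFactorization_injective.mpr hf).countable
  have h := Cardinal.mk_le_aleph0_iff.mpr this
  rw [Cardinal.mk_arrow, Cardinal.mk_bool, Cardinal.mk_nat] at h
  simp only [Cardinal.lift_ofNat, Cardinal.lift_aleph0] at h
  exact (Cardinal.cantor _).not_ge h

lemma Real.eventually_cos_ne_zero (θ : ℝ) : ∀ᶠ θ' in 𝓝[≠] θ, Real.cos θ' ≠ 0 := by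
  by_cases h : Real.cos θ = 0
  · have hsin : Real.sin θ ≠ 0 := fun hs => by simpa [h, hs] using Real.sin_sq_add_cos_sq θ
    exact (Real.hasDerivAt_cos θ).eventually_ne (neg_ne_zero.mpr hsin)
  · exact eventually_nhdsWithin_of_eventually_nhds
      (Real.continuous_cos.continuousAt.eventually_ne h)

lemma Complex.sphere_subset_closure_sphere_inter_re_ne_zero {t : ℝ} (ht : 0 < t) :
    sphere (0 : ℂ) t ⊆ closure (sphere 0 t ∩ {w | w.re ≠ 0}) := by
  intro z hz
  set m : ℝ → ℂ := fun θ => t * exp (θ * I)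
  have hmz : m z.arg = z := by
    simpa only [m, mem_sphere_zero_iff_norm.mp hz] using norm_mul_exp_arg_mul_I z
  refine mem_closure_of_tendsto (f := m) (b := 𝓝[≠] z.arg) ?_ ?_
  · simpa only [hmz] using ((by fun_prop : Continuous m).tendsto z.arg).mono_left
      (nhdsWithin_le_nhds (s := {z.arg}ᶜ))
  · filter_upwards [Real.eventually_cos_ne_zero z.arg] with θ hθ
    refine ⟨?_, ?_⟩
    · simp [m, norm_exp, abs_of_pos ht]
    · simp [m, exp_ofReal_mul_I_re, ht.ne', hθ]

lemma Complex.dense_setOf_re_ne_zero : Dense {w : ℂ | w.re ≠ 0} :=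
  (dense_compl_singleton (0 : ℝ)).preimage isOpenMap_re

lemma Complex.norm_sq_add_sq_of_norm_eq {ζ : ℂ} {t : ℝ} (h : ‖ζ‖ = t) :
    ‖ζ ^ 2 + (t : ℂ) ^ 2‖ = 2 * |ζ.re| * t := by
  have hζ : ζ ^ 2 + (t : ℂ) ^ 2 = ζ * (2 * ζ.re) := by
    rw [← h, ← mul_conj', sq, ← mul_add, add_conj]
    push_cast; ring
  rw [hζ, norm_mul, h, norm_mul, norm_real, Real.norm_eq_abs]
  norm_num; ring

/-- On both boundary circles of the annulus `ε < ‖ζ‖ < ρ` this weight is `O(|Re ζ|)`, while well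
inside the annulus it is comparable to `ρ² ‖ζ‖`. -/
noncomputable def annulusWeight (ε ρ : ℝ) (ζ : ℂ) : ℂ :=
  (ζ ^ 2 + (ρ : ℂ) ^ 2) * (ζ ^ 2 + (ε : ℂ) ^ 2) / ζ

lemma annulusWeight_comm (ε ρ : ℝ) : annulusWeight ε ρ = annulusWeight ρ ε := by
  ext1 ζ; simp only [annulusWeight, mul_comm]

lemma differentiableOn_annulusWeight (ε ρ : ℝ) :
    DifferentiableOn ℂ (annulusWeight ε ρ) {0}ᶜ := by
  unfold annulusWeight
  fun_prop (disch := exact fun _ h => h)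

lemma norm_annulusWeight_le_of_norm_eq {ε ρ : ℝ} (hρ : 0 < ρ) {ζ : ℂ} (hζ : ‖ζ‖ = ρ) :
    ‖annulusWeight ε ρ ζ‖ ≤ 2 * |ζ.re| * (ρ ^ 2 + ε ^ 2) := by
  have hε : ‖ζ ^ 2 + (ε : ℂ) ^ 2‖ ≤ ρ ^ 2 + ε ^ 2 := by
    refine (norm_add_le _ _).trans_eq ?_
    simp [hζ]
  rw [annulusWeight, norm_div, norm_mul, norm_sq_add_sq_of_norm_eq hζ, hζ,
    mul_assoc, mul_div_assoc, mul_div_cancel_left₀ _ hρ.ne']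
  gcongr

lemma norm_annulusWeight_le {ε ρ : ℝ} (hε : 0 < ε) (hερ : ε ≤ ρ) {ζ : ℂ}
    (hζ : ‖ζ‖ = ρ ∨ ‖ζ‖ = ε) : ‖annulusWeight ε ρ ζ‖ ≤ 4 * ρ ^ 2 * |ζ.re| := by
  have hsq : ρ ^ 2 + ε ^ 2 ≤ 2 * ρ ^ 2 := by nlinarith
  rcases hζ with hζ | hζ
  · calc _ ≤ 2 * |ζ.re| * (ρ ^ 2 + ε ^ 2) := norm_annulusWeight_le_of_norm_eq (hε.trans_le hερ) hζ
      _ ≤ 4 * ρ ^ 2 * |ζ.re| := by nlinarith [abs_nonneg ζ.re]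
  · calc _ ≤ 2 * |ζ.re| * (ε ^ 2 + ρ ^ 2) := by
          rw [annulusWeight_comm]; exact norm_annulusWeight_le_of_norm_eq hε hζ
      _ ≤ 4 * ρ ^ 2 * |ζ.re| := by nlinarith [abs_nonneg ζ.re]

lemma le_norm_annulusWeight {t ρ : ℝ} (ht : 0 < t) (htρ : 2 * t ≤ ρ) {ζ : ℂ} (hζ : ‖ζ‖ = t) :
    9 / 16 * ρ ^ 2 * t ≤ ‖annulusWeight (t / 2) ρ ζ‖ := by
  have hρ : 3 / 4 * ρ ^ 2 ≤ ‖ζ ^ 2 + (ρ : ℂ) ^ 2‖ := by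
    have := norm_sub_norm_le ((ρ : ℂ) ^ 2) (-ζ ^ 2)
    simp only [norm_neg, norm_pow, norm_real, Real.norm_eq_abs, sq_abs, hζ, sub_neg_eq_add,
      add_comm ((ρ : ℂ) ^ 2)] at this
    nlinarith
  have ht' : 3 / 4 * t ^ 2 ≤ ‖ζ ^ 2 + ((t / 2 : ℝ) : ℂ) ^ 2‖ := by
    have := norm_sub_norm_le (ζ ^ 2) (-((t / 2 : ℝ) : ℂ) ^ 2)
    simp only [norm_neg, norm_pow, norm_real, Real.norm_eq_abs, sq_abs, hζ, sub_neg_eq_add] at this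
    nlinarith
  rw [annulusWeight, norm_div, norm_mul, hζ, le_div_iff₀ ht]
  calc 9 / 16 * ρ ^ 2 * t * t = (3 / 4 * ρ ^ 2) * (3 / 4 * t ^ 2) := by ring
    _ ≤ _ := by gcongr

section PoleOrder

variable {Y : Type*} [NormedAddCommGroup Y]

lemma norm_le_of_mem_sphere_of_re_ne_zero {h : ℂ → Y} {t C : ℝ} (ht : 0 < t)
    (hh : ContinuousOn h (sphere 0 t)) (hC : ∀ w ∈ sphere (0 : ℂ) t, w.re ≠ 0 → ‖h w‖ ≤ C)
    {w : ℂ} (hw : w ∈ sphere 0 t) : ‖h w‖ ≤ C := by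
  set A := sphere (0 : ℂ) t ∩ {w | w.re ≠ 0}
  have hAcl : closure A ⊆ sphere 0 t := closure_minimal inter_subset_left isClosed_sphere
  have hhA : h '' A ⊆ closedBall 0 C := by
    rintro _ ⟨v, hv, rfl⟩
    simpa using hC v hv.1 hv.2
  have := (hh.mono hAcl).image_closure
    (mem_image_of_mem h (sphere_subset_closure_sphere_inter_re_ne_zero ht hw))
  simpa using closure_minimal hhA isClosed_closedBall this

variable [NormedSpace ℂ Y] {f : ℂ → Y} {r M : ℝ} {m : ℕ}

lemma norm_annulusWeight_pow_smul_le (hf : DifferentiableOn ℂ f (ball 0 r \ {0}))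
    (hb : ∀ ζ ∈ ball (0 : ℂ) r, ζ.re ≠ 0 → ‖f ζ‖ ≤ M / |ζ.re| ^ m)
    {ε ρ : ℝ} (hε : 0 < ε) (hερ : ε < ρ) (hρr : ρ < r) {ζ : ℂ}
    (hζ : ζ ∈ ball 0 ρ \ closedBall 0 ε) :
    ‖annulusWeight ε ρ ζ ^ m • f ζ‖ ≤ (4 * ρ ^ 2) ^ m * M := by
  set U := ball (0 : ℂ) ρ \ closedBall 0 ε
  set h := fun w => annulusWeight ε ρ w ^ m • f w
  have hρ : 0 < ρ := hε.trans hερ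
  have hUcl : closure U ⊆ ball 0 r \ {0} := by
    refine (closure_minimal (sdiff_subset_sdiff ball_subset_closedBall ball_subset_closedBall)
      (isClosed_closedBall.sdiff isOpen_ball)).trans (sdiff_subset_sdiff ?_ ?_)
    · exact closedBall_subset_ball hρr
    · simpa using hε
  have hUfr : frontier U ⊆ sphere 0 ρ ∪ sphere 0 ε := by
    rw [show U = ball 0 ρ ∩ (closedBall 0 ε)ᶜ from sdiff_eq]
    refine (frontier_inter_subset _ _).trans (union_subset_union ?_ ?_)
    · exact inter_subset_left.trans (frontier_ball 0 hρ.ne').subset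
    · rw [frontier_compl, frontier_closedBall 0 hε.ne']
      exact inter_subset_right
  have hsph : sphere (0 : ℂ) ρ ∪ sphere 0 ε ⊆ ball 0 r \ {0} := by
    rintro w (hw | hw) <;> rw [mem_sphere_zero_iff_norm] at hw <;>
      refine ⟨mem_ball_zero_iff.mpr (by linarith), fun h0 => ?_⟩ <;>
      simp only [mem_singleton_iff.mp h0, norm_zero] at hw <;> linarith
  have hh : DifferentiableOn ℂ h (ball 0 r \ {0}) :=
    (((differentiableOn_annulusWeight ε ρ).mono (sdiff_subset_compl _ _)).pow m).smul hf
  have hsphere : ∀ w ∈ sphere (0 : ℂ) ρ ∪ sphere 0 ε, w.re ≠ 0 → ‖h w‖ ≤ (4 * ρ ^ 2) ^ m * M := by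
    intro w hw hre
    have hw' : ‖w‖ = ρ ∨ ‖w‖ = ε := by simpa using hw
    have hre' : 0 < |w.re| := abs_pos.mpr hre
    calc ‖h w‖ = ‖annulusWeight ε ρ w‖ ^ m * ‖f w‖ := by simp [h, norm_smul]
      _ ≤ (4 * ρ ^ 2 * |w.re|) ^ m * (M / |w.re| ^ m) := by
        gcongr
        exacts [norm_annulusWeight_le hε hερ.le hw', hb w (hsph hw).1 hre]
      _ = (4 * ρ ^ 2) ^ m * M := by field_simp; ring
  refine Complex.norm_le_of_forall_mem_frontier_norm_le (isBounded_ball.subset sdiff_subset)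
    ⟨hh.mono (subset_closure.trans hUcl), hh.continuousOn.mono hUcl⟩ (fun w hw => ?_)
    (subset_closure hζ)
  rcases hUfr hw with hw' | hw'
  · exact norm_le_of_mem_sphere_of_re_ne_zero hρ
      (hh.continuousOn.mono (subset_union_left.trans hsph))
      (fun v hv => hsphere v (Or.inl hv)) hw'
  · exact norm_le_of_mem_sphere_of_re_ne_zero hε
      (hh.continuousOn.mono (subset_union_right.trans hsph))
      (fun v hv => hsphere v (Or.inr hv)) hw'

lemma norm_pow_smul_le_of_norm_le_div_abs_re_pow (hr : 0 < r)
    (hf : DifferentiableOn ℂ f (ball 0 r \ {0}))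
    (hb : ∀ ζ ∈ ball (0 : ℂ) r, ζ.re ≠ 0 → ‖f ζ‖ ≤ M / |ζ.re| ^ m)
    {ζ : ℂ} (hζ : ζ ∈ ball 0 (r / 4) \ {0}) : ‖ζ ^ m • f ζ‖ ≤ (64 / 9) ^ m * M := by
  obtain ⟨t, hζt⟩ : ∃ t, ‖ζ‖ = t := ⟨_, rfl⟩
  obtain ⟨ρ, hρ⟩ : ∃ ρ, ρ = r / 2 := ⟨_, rfl⟩
  have ht : 0 < t := hζt ▸ norm_pos_iff.mpr hζ.2
  have htr : t < r / 4 := hζt ▸ mem_ball_zero_iff.mp hζ.1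
  have hmem : ζ ∈ ball 0 ρ \ closedBall 0 (t / 2) := by
    simp only [Set.mem_sdiff, mem_ball_zero_iff, mem_closedBall_zero_iff, not_le, hζt]
    constructor <;> linarith
  have hup := norm_annulusWeight_pow_smul_le hf hb (half_pos ht) (by linarith) (by linarith) hmem
  have hlow := le_norm_annulusWeight ht (by linarith) hζt (ρ := ρ)
  have hc : 0 < (9 / 16 * ρ ^ 2) ^ m := by rw [hρ]; positivity
  refine le_of_mul_le_mul_left ?_ hc
  calc (9 / 16 * ρ ^ 2) ^ m * ‖ζ ^ m • f ζ‖ = (9 / 16 * ρ ^ 2 * t) ^ m * ‖f ζ‖ := by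
        rw [norm_smul, norm_pow, hζt]; ring
    _ ≤ ‖annulusWeight (t / 2) ρ ζ ^ m • f ζ‖ := by
        rw [norm_smul, norm_pow]; gcongr
    _ ≤ (4 * ρ ^ 2) ^ m * M := hup
    _ = (9 / 16 * ρ ^ 2) ^ m * ((64 / 9) ^ m * M) := by
        rw [← mul_assoc, ← mul_pow]; ring_nf

lemma eq_zero_of_eqOn_pow_succ_smul {g : ℂ → Y} {s : ℝ} {k : ℕ} (hs : 0 < s)
    (hg : ContinuousAt g 0) (heq : EqOn g (fun ζ => ζ ^ (k + 1) • f ζ) (ball 0 s \ {0}))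
    (herg : Tendsto (fun α : ℝ => (α : ℂ) • f α) (𝓝[>] 0) (𝓝 0)) : g 0 = 0 := by
  have hofReal : Tendsto (fun α : ℝ => (α : ℂ)) (𝓝[>] 0) (𝓝 0) :=
    (continuous_ofReal.tendsto' 0 0 ofReal_zero).mono_left nhdsWithin_le_nhds
  have hlim : Tendsto (fun α : ℝ => g α) (𝓝[>] 0) (𝓝 (g 0)) := hg.tendsto.comp hofReal
  refine tendsto_nhds_unique hlim ?_
  have hpow : Tendsto (fun α : ℝ => (α : ℂ) ^ k • ((α : ℂ) • f α)) (𝓝[>] 0) (𝓝 0) := by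
    simpa using (hofReal.pow k).smul herg
  refine hpow.congr' ?_
  filter_upwards [Ioo_mem_nhdsGT hs] with α hα
  have hαs : (α : ℂ) ∈ ball 0 s \ {0} := by
    simp [Real.norm_eq_abs, abs_of_pos hα.1, hα.2, hα.1.ne']
  rw [heq hαs]
  beta_reduce
  rw [pow_succ, mul_smul]

variable [CompleteSpace Y]

lemma exists_differentiableOn_eqOn_of_eqOn_pow_smul {s : ℝ} (hs : 0 < s)
    (herg : Tendsto (fun α : ℝ => (α : ℂ) • f α) (𝓝[>] 0) (𝓝 0)) (k : ℕ) {g : ℂ → Y}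
    (hg : DifferentiableOn ℂ g (ball 0 s)) (heq : EqOn g (fun ζ => ζ ^ k • f ζ) (ball 0 s \ {0})) :
    ∃ g' : ℂ → Y, DifferentiableOn ℂ g' (ball 0 s) ∧ EqOn g' f (ball 0 s \ {0}) := by
  induction k generalizing g with
  | zero => exact ⟨g, hg, fun ζ hζ => by simpa using heq hζ⟩
  | succ k ih =>
    have hball : ball (0 : ℂ) s ∈ 𝓝 0 := ball_mem_nhds 0 hs
    have hg0 : g 0 = 0 :=
      eq_zero_of_eqOn_pow_succ_smul hs (hg.continuousOn.continuousAt hball) heq herg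
    refine ih ((differentiableOn_dslope hball).mpr hg) fun ζ hζ => ?_
    have hζ0 : ζ ≠ 0 := hζ.2
    rw [dslope_of_ne _ hζ0, slope_def_module, hg0, sub_zero, sub_zero, heq hζ]
    beta_reduce
    rw [pow_succ', mul_smul, inv_smul_smul₀ hζ0]

lemma exists_differentiableOn_eqOn_of_norm_le_div_abs_re_pow_at_zero (hr : 0 < r)
    (hf : DifferentiableOn ℂ f (ball 0 r \ {0}))
    (hb : ∀ ζ ∈ ball (0 : ℂ) r, ζ.re ≠ 0 → ‖f ζ‖ ≤ M / |ζ.re| ^ m)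
    (herg : Tendsto (fun α : ℝ => (α : ℂ) • f α) (𝓝[>] 0) (𝓝 0)) :
    ∃ g : ℂ → Y, DifferentiableOn ℂ g (ball 0 (r / 4)) ∧ EqOn g f (ball 0 (r / 4) \ {0}) := by
  have hr4 : 0 < r / 4 := by positivity
  set h := fun ζ : ℂ => ζ ^ m • f ζ
  have hh : DifferentiableOn ℂ h (ball 0 (r / 4) \ {0}) :=
    (differentiableOn_pow m).smul
      (hf.mono (sdiff_subset_sdiff_left (ball_subset_ball (by linarith))))
  have hbdd : BddAbove (norm ∘ h '' (ball 0 (r / 4) \ {0})) := by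
    refine ⟨(64 / 9) ^ m * M, ?_⟩
    rintro _ ⟨ζ, hζ, rfl⟩
    exact norm_pow_smul_le_of_norm_le_div_abs_re_pow hr hf hb hζ
  refine exists_differentiableOn_eqOn_of_eqOn_pow_smul hr4 herg m
    (differentiableOn_update_limUnder_of_bddAbove (ball_mem_nhds 0 hr4) hh hbdd) ?_
  intro ζ hζ
  exact Function.update_of_ne hζ.2 _ _

lemma exists_differentiableOn_eqOn_of_norm_le_div_abs_re_pow {f : ℂ → Y} {z : ℂ}
    (hz : z.re = 0) (hr : 0 < r) (hf : DifferentiableOn ℂ f (ball z r \ {z}))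
    (hb : ∀ w ∈ ball z r, w.re ≠ 0 → ‖f w‖ ≤ M / |w.re| ^ m)
    (herg : Tendsto (fun α : ℝ => (α : ℂ) • f (z + α)) (𝓝[>] 0) (𝓝 0)) :
    ∃ g : ℂ → Y, DifferentiableOn ℂ g (ball z (r / 4)) ∧ EqOn g f (ball z (r / 4) \ {z}) := by
  have hmem : ∀ {ζ : ℂ} {t : ℝ}, z + ζ ∈ ball z t \ {z} ↔ ζ ∈ ball 0 t \ {0} := by
    simp
  obtain ⟨g, hg, hgf⟩ := exists_differentiableOn_eqOn_of_norm_le_div_abs_re_pow_at_zero hr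
    (hf.comp (by fun_prop) fun ζ hζ => hmem.mpr hζ)
    (fun ζ hζ hre => by
      simpa [hz] using hb (z + ζ) (by simpa using hζ) (by simpa [hz] using hre))
    herg
  refine ⟨fun w => g (w - z), hg.comp (by fun_prop) fun w hw => ?_, fun w hw => ?_⟩
  · simpa [← dist_eq_norm] using hw
  · have hw' : z + (w - z) ∈ ball z (r / 4) \ {z} := by rwa [add_sub_cancel]
    simpa using hgf (hmem.mp hw')

end PoleOrder

section Extension

variable {Y : Type*} [NormedAddCommGroup Y] [NormedSpace ℂ Y]

def ExtendsHolomorphicallyAt (u : ℂ → Y) (s : Set ℂ) (z : ℂ) : Prop :=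
  ∃ r > 0, ∃ g : ℂ → Y, DifferentiableOn ℂ g (ball z r) ∧ EqOn g u (ball z r ∩ s)

variable {u : ℂ → Y} {s : Set ℂ}

lemma isOpen_setOf_extendsHolomorphicallyAt :
    IsOpen {z | ExtendsHolomorphicallyAt u s z} := by
  refine Metric.isOpen_iff.mpr fun z ⟨r, hr, g, hg, hgu⟩ => ⟨r, hr, fun w hw => ?_⟩
  have hsub : ball w (r - dist w z) ⊆ ball z r := ball_subset_ball' (by linarith)
  exact ⟨r - dist w z, sub_pos.mpr hw, g, hg.mono hsub, hgu.mono (inter_subset_inter_left _ hsub)⟩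

lemma extendsHolomorphicallyAt_of_mem (hs : IsOpen s) (hu : DifferentiableOn ℂ u s) {z : ℂ}
    (hz : z ∈ s) : ExtendsHolomorphicallyAt u s z := by
  obtain ⟨r, hr, hrs⟩ := Metric.isOpen_iff.mp hs z hz
  exact ⟨r, hr, u, hu.mono hrs, eqOn_refl u _⟩

lemma exists_differentiableOn_eqOn_of_forall_extendsHolomorphicallyAt (hs : Dense s)
    {V : Set ℂ} (hV : IsOpen V) (h : ∀ z ∈ V, ExtendsHolomorphicallyAt u s z) :
    ∃ F : ℂ → Y, DifferentiableOn ℂ F V ∧ EqOn F u (V ∩ s) := by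
  choose! r hr g hg hgu using h
  have hgg : ∀ z ∈ V, ∀ w ∈ V, EqOn (g z) (g w) (ball z (r z) ∩ ball w (r w)) := by
    intro z hz w hw
    have hU : IsOpen (ball z (r z) ∩ ball w (r w)) := isOpen_ball.inter isOpen_ball
    refine EqOn.of_subset_closure (s := ball z (r z) ∩ ball w (r w) ∩ s) ?_
      ((hg z hz).continuousOn.mono inter_subset_left)
      ((hg w hw).continuousOn.mono inter_subset_right) inter_subset_left
      (hs.open_subset_closure_inter hU)
    exact fun v hv => (hgu z hz ⟨hv.1.1, hv.2⟩).trans (hgu w hw ⟨hv.1.2, hv.2⟩).symm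
  refine ⟨fun z => g z z, fun z hz => ?_, fun z hz => hgu z hz.1 ⟨mem_ball_self (hr z hz.1), hz.2⟩⟩
  have hnhds : ball z (r z) ∩ V ∈ 𝓝 z :=
    (isOpen_ball.inter hV).mem_nhds ⟨mem_ball_self (hr z hz), hz⟩
  have hgz := (hg z hz).differentiableAt (isOpen_ball.mem_nhds (mem_ball_self (hr z hz)))
  refine (hgz.congr_of_eventuallyEq ?_).differentiableWithinAt
  filter_upwards [hnhds] with w hw
  exact hgg w hw.2 z hz ⟨mem_ball_self (hr w hw.2), hw.1⟩

lemma forall_extendsHolomorphicallyAt_of_countable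
    (hcount : {z | ¬ExtendsHolomorphicallyAt u s z}.Countable)
    (hiso : ∀ z, ¬ExtendsHolomorphicallyAt u s z →
      (∀ᶠ w in 𝓝[≠] z, ExtendsHolomorphicallyAt u s w) → ExtendsHolomorphicallyAt u s z)
    (z : ℂ) : ExtendsHolomorphicallyAt u s z := by
  by_contra hz
  have hperfect : Perfect {z | ¬ExtendsHolomorphicallyAt u s z} := by
    refine ⟨isOpen_setOf_extendsHolomorphicallyAt.isClosed_compl, fun w hw => ?_⟩
    rw [accPt_iff_frequently_nhdsNE]
    by_contra hnear
    exact hw (hiso w hw (by simpa [Filter.not_frequently] using hnear))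
  exact (hperfect.eq_empty_of_countable hcount).subset hz

variable [CompleteSpace Y] {M : ℝ} {m : ℕ}

lemma extendsHolomorphicallyAt_of_eventually {z : ℂ} (hz : z.re = 0)
    (hnear : ∀ᶠ w in 𝓝[≠] z, ExtendsHolomorphicallyAt u {w | w.re ≠ 0} w)
    (hb : ∀ w : ℂ, w.re ≠ 0 → |w.re| < 1 → ‖u w‖ ≤ M / |w.re| ^ m)
    (herg : Tendsto (fun α : ℝ => (α : ℂ) • u (z + α)) (𝓝[>] 0) (𝓝 0)) :
    ExtendsHolomorphicallyAt u {w | w.re ≠ 0} z := by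
  obtain ⟨ρ, hρ, hρext⟩ := Metric.mem_nhdsWithin_iff.mp hnear
  obtain ⟨r, hr, hrρ, hr1⟩ : ∃ r > 0, r ≤ ρ ∧ r ≤ 1 :=
    ⟨min ρ 1, lt_min hρ one_pos, min_le_left _ _, min_le_right _ _⟩
  have hne : ∀ {w : ℂ}, w.re ≠ 0 → w ≠ z := fun hw h => hw (h ▸ hz)
  obtain ⟨F, hF, hFu⟩ := exists_differentiableOn_eqOn_of_forall_extendsHolomorphicallyAt
    dense_setOf_re_ne_zero (isOpen_ball.sdiff isClosed_singleton) (V := ball z r \ {z})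
    fun w hw => hρext ⟨ball_subset_ball hrρ hw.1, hw.2⟩
  have hFb : ∀ w ∈ ball z r, w.re ≠ 0 → ‖F w‖ ≤ M / |w.re| ^ m := by
    intro w hw hre
    rw [hFu ⟨⟨hw, hne hre⟩, hre⟩]
    refine hb w hre ?_
    calc |w.re| = |(w - z).re| := by simp [hz]
      _ ≤ ‖w - z‖ := abs_re_le_norm _
      _ < 1 := (mem_ball_iff_norm.mp hw).trans_le hr1
  have hFerg : Tendsto (fun α : ℝ => (α : ℂ) • F (z + α)) (𝓝[>] 0) (𝓝 0) := by
    refine herg.congr' ?_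
    filter_upwards [Ioo_mem_nhdsGT hr] with α hα
    have hre : (z + α).re ≠ 0 := by simp [hz, hα.1.ne']
    rw [hFu ⟨⟨by simpa [abs_of_pos hα.1] using hα.2, hne hre⟩, hre⟩]
  obtain ⟨g, hg, hgF⟩ :=
    exists_differentiableOn_eqOn_of_norm_le_div_abs_re_pow hz hr hF hFb hFerg
  refine ⟨r / 4, by positivity, g, hg, fun w hw => ?_⟩
  rw [hgF ⟨hw.1, hne hw.2⟩, hFu ⟨⟨ball_subset_ball (by linarith) hw.1, hne hw.2⟩, hw.2⟩]

end Extension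

theorem resolvent_entire_extension_general
    {Y : Type*} [NormedAddCommGroup Y] [NormedSpace ℂ Y] [CompleteSpace Y]
    (R : ℂ → Y →L[ℂ] Y)
    (x : Y) (n : ℕ) (M : ℝ)
    (hanal : DifferentiableOn ℂ (fun lam => R lam x) {lam : ℂ | lam.re ≠ 0})
    (E : Set ℝ) (hEcount : E.Countable)
    (hext : ∀ ξ : ℝ, ξ ∉ E → ∃ r > (0 : ℝ), ∃ g : ℂ → Y,
      DifferentiableOn ℂ g (Metric.ball (Complex.I * ξ) r) ∧
      ∀ lam ∈ Metric.ball (Complex.I * ξ) r, lam.re ≠ 0 → g lam = R lam x)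
    (hergodic : ∀ η ∈ E,
      Tendsto (fun α : ℝ => (α : ℂ) • R ((α : ℂ) + Complex.I * η) x)
        (𝓝[>] 0) (𝓝 0))
    (hbound : ∀ lam : ℂ, lam.re ≠ 0 → |lam.re| < 1 →
      ‖R lam x‖ ≤ M / |lam.re| ^ (n + 1)) :
    ∃ F : ℂ → Y, Differentiable ℂ F ∧ ∀ lam : ℂ, lam.re ≠ 0 → F lam = R lam x := by
  set Sing := {z | ¬ExtendsHolomorphicallyAt (fun lam => R lam x) {lam : ℂ | lam.re ≠ 0} z}
  have hSingE : Sing ⊆ (fun η : ℝ => I * η) '' E := by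
    intro z hz
    have hz0 : z.re = 0 := by
      by_contra h
      exact hz (extendsHolomorphicallyAt_of_mem (isOpen_ne_fun continuous_re continuous_const)
        hanal h)
    have hzI : I * z.im = z := by apply Complex.ext <;> simp [hz0]
    refine ⟨z.im, ?_, hzI⟩
    by_contra hE
    refine hz ?_
    obtain ⟨r, hr, g, hg, hgu⟩ := hext z.im hE
    exact hzI ▸ ⟨r, hr, g, hg, fun w hw => hgu w hw.1 hw.2⟩
  have hall : ∀ z, ExtendsHolomorphicallyAt (fun lam => R lam x) {lam : ℂ | lam.re ≠ 0} z :=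
    forall_extendsHolomorphicallyAt_of_countable ((hEcount.image _).mono hSingE)
      fun z hz hnear => by
        obtain ⟨η, hη, rfl⟩ := hSingE hz
        exact extendsHolomorphicallyAt_of_eventually (by simp) hnear hbound
          (by simpa only [add_comm] using hergodic η hη)
  obtain ⟨F, hF, hFu⟩ := exists_differentiableOn_eqOn_of_forall_extendsHolomorphicallyAt
    dense_setOf_re_ne_zero isOpen_univ fun z _ => hall z
  exact ⟨F, differentiableOn_univ.mp hF, fun lam h => hFu ⟨mem_univ _, h⟩⟩

/-- let `D` be a closed operator on a Banach space `Y` with resolvent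
family `R` defined off the imaginary axis, and `x ∈ Y`. Suppose `u(λ) = R(λ)x`
(analytic off `iℝ`) extends analytically across every point `iξ` of `iℝ` with
`ξ ∉ E`, where `E ⊆ ℝ` is countable and closed; at each `η ∈ E` the ergodic condition
`α R(α + iη)x → 0` as `α ↓ 0` holds; and `‖R(λ)x‖ ≤ M/|Re λ|^{n+1}` near `iℝ`.
Then `λ ↦ R(λ)x` extends to an entire function. -/
theorem resolvent_entire_extension
    {Y : Type*} [NormedAddCommGroup Y] [NormedSpace ℂ Y] [CompleteSpace Y]
    (D : Y →ₗ[ℂ] Y) (hclosed : IsClosed {p : Y × Y | D p.1 = p.2})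
    (R : ℂ → Y →L[ℂ] Y)
    (hres : ∀ lam : ℂ, lam.re ≠ 0 → ∀ y : Y,
      lam • R lam y - D (R lam y) = y ∧ R lam (lam • y - D y) = y)
    (x : Y) (n : ℕ) (M : ℝ)
    (hanal : DifferentiableOn ℂ (fun lam => R lam x) {lam : ℂ | lam.re ≠ 0})
    (E : Set ℝ) (hEcount : E.Countable) (hEclosed : IsClosed E)
    (hext : ∀ ξ : ℝ, ξ ∉ E → ∃ r > (0 : ℝ), ∃ g : ℂ → Y,
      DifferentiableOn ℂ g (Metric.ball (Complex.I * ξ) r) ∧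
      ∀ lam ∈ Metric.ball (Complex.I * ξ) r, lam.re ≠ 0 → g lam = R lam x)
    (hergodic : ∀ η ∈ E,
      Tendsto (fun α : ℝ => (α : ℂ) • R ((α : ℂ) + Complex.I * η) x)
        (𝓝[>] 0) (𝓝 0))
    (hbound : ∀ lam : ℂ, lam.re ≠ 0 → |lam.re| < 1 →
      ‖R lam x‖ ≤ M / |lam.re| ^ (n + 1)) :
    ∃ F : ℂ → Y, Differentiable ℂ F ∧ ∀ lam : ℂ, lam.re ≠ 0 → F lam = R lam x :=
  resolvent_entire_extension_general R x n M hanal E hEcount hext hergodic hbound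
end
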